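/- arXiv:0710.1959 — 3 statements merged into one kernel-verified Lean document; each statement's English description precedes it below -/
import Mathlib

section
/- Let E: [0,∞) → [0,∞) be a non-increasing function and suppose there exists C > 0 such that for all t ≥ 0, ∫_t^∞ E(s) ds ≤ C E(t). Then, setting T = C, for all t ≥ T one has E(t) ≤ E(0) exp(1 - t/T). -/
/-!
Write `F t = ∫_t^∞ E`. Since `E` is non-increasing, `F s - F (s + h) = ∫_s^{s+h} E ≥ h E(s + h)`,
and the hypothesis gives `E(s + h) ≥ F (s + h) / C`, so `F (s + h) (1 + h / C) ≤ F s`.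
Iterating with step `t / n` and letting `n → ∞` turns this into `F t ≤ F 0 e^{-t/C}`.
Finally `C E(t) ≤ ∫_{t-C}^t E ≤ F (t - C) ≤ e^{1 - t/C} F 0 ≤ e^{1 - t/C} C E(0)`.
-/

open MeasureTheory Set Filter

section StepContraction

variable {F : ℝ → ℝ} {c : ℝ}

theorem mul_one_add_pow_le_of_step (hc : 0 ≤ c)
    (hstep : ∀ s h, 0 ≤ s → 0 ≤ h → F (s + h) * (1 + c * h) ≤ F s) {h : ℝ} (hh : 0 ≤ h) :
    ∀ n : ℕ, F (n * h) * (1 + c * h) ^ n ≤ F 0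
  | 0 => by simp
  | n + 1 => by
    calc F ((n + 1 : ℕ) * h) * (1 + c * h) ^ (n + 1)
        = F (n * h + h) * (1 + c * h) * (1 + c * h) ^ n := by push_cast; ring_nf
      _ ≤ F (n * h) * (1 + c * h) ^ n := by gcongr; exact hstep _ _ (by positivity) hh
      _ ≤ F 0 := mul_one_add_pow_le_of_step hc hstep hh n

theorem mul_exp_le_of_step (hc : 0 ≤ c)
    (hstep : ∀ s h, 0 ≤ s → 0 ≤ h → F (s + h) * (1 + c * h) ≤ F s) {t : ℝ} (ht : 0 ≤ t) :
    F t * Real.exp (c * t) ≤ F 0 := by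
  have hlim : Tendsto (fun n : ℕ => F t * (1 + c * t / n) ^ n) atTop
      (nhds (F t * Real.exp (c * t))) :=
    (Real.tendsto_one_add_div_pow_exp (c * t)).const_mul (F t)
  refine le_of_tendsto hlim (eventually_atTop.2 ⟨1, fun n hn => ?_⟩)
  have hn : (n : ℝ) ≠ 0 := by positivity
  have := mul_one_add_pow_le_of_step hc hstep (div_nonneg ht n.cast_nonneg) n
  rwa [mul_div_cancel₀ t hn, ← mul_div_assoc] at this

end StepContraction

section TailIntegral

variable {E : ℝ → ℝ}

theorem mul_le_intervalIntegral_of_antitoneOn {a b : ℝ} (hE : AntitoneOn E (Icc a b))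
    (hab : a ≤ b) : (b - a) * E b ≤ ∫ s in a..b, E s := by
  have hEint : IntervalIntegrable E volume a b :=
    (hE.mono (uIcc_of_le hab).le).intervalIntegrable
  calc (b - a) * E b = ∫ _ in a..b, E b := by simp
    _ ≤ ∫ s in a..b, E s := intervalIntegral.integral_mono_on hab intervalIntegrable_const hEint
        fun x hx => hE hx ⟨hab, le_rfl⟩ hx.2

theorem mul_le_setIntegral_Ioi_of_antitoneOn {a b : ℝ} (hE : AntitoneOn E (Ici a))
    (hint : IntegrableOn E (Ioi a)) (hE0 : ∀ x ∈ Ioi b, 0 ≤ E x) (hab : a ≤ b) :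
    (b - a) * E b ≤ ∫ x in Ioi a, E x := by
  rw [← intervalIntegral.integral_interval_add_Ioi hint (hint.mono_set (Ioi_subset_Ioi hab))]
  have htail : 0 ≤ ∫ x in Ioi b, E x := setIntegral_nonneg measurableSet_Ioi hE0
  have hlow := mul_le_intervalIntegral_of_antitoneOn (hE.mono Icc_subset_Ici_self) hab
  linarith

variable {C : ℝ} (hE : AntitoneOn E (Ici 0)) (hint : IntegrableOn E (Ioi 0))
  (hineq : ∀ t, 0 ≤ t → ∫ s in Ioi t, E s ≤ C * E t)
include hE hint hineq

theorem setIntegral_Ioi_add_mul_le (hC : 0 < C) {s h : ℝ} (hs : 0 ≤ s) (hh : 0 ≤ h) :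
    (∫ x in Ioi (s + h), E x) * (1 + C⁻¹ * h) ≤ ∫ x in Ioi s, E x := by
  have hsh : 0 ≤ s + h := by linarith
  have hsplit := intervalIntegral.integral_interval_add_Ioi
    (hint.mono_set (Ioi_subset_Ioi hs)) (hint.mono_set (Ioi_subset_Ioi hsh))
  have hlow : h * E (s + h) ≤ ∫ x in s..s + h, E x := by
    simpa using mul_le_intervalIntegral_of_antitoneOn
      (hE.mono fun x hx => hs.trans hx.1) (by linarith : s ≤ s + h)
  have htail : C⁻¹ * ∫ x in Ioi (s + h), E x ≤ E (s + h) := by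
    rw [inv_mul_le_iff₀ hC]; exact hineq _ hsh
  calc (∫ x in Ioi (s + h), E x) * (1 + C⁻¹ * h)
      = (∫ x in Ioi (s + h), E x) + h * (C⁻¹ * ∫ x in Ioi (s + h), E x) := by ring
    _ ≤ (∫ x in Ioi (s + h), E x) + ∫ x in s..s + h, E x := by
      gcongr
      exact (mul_le_mul_of_nonneg_left htail hh).trans hlow
    _ = ∫ x in Ioi s, E x := by rw [add_comm, hsplit]

theorem setIntegral_Ioi_mul_exp_le (hC : 0 < C) {t : ℝ} (ht : 0 ≤ t) :
    (∫ x in Ioi t, E x) * Real.exp (C⁻¹ * t) ≤ ∫ x in Ioi 0, E x :=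
  mul_exp_le_of_step (F := fun t => ∫ x in Ioi t, E x) (inv_nonneg.2 hC.le)
    (fun _ _ hs hh => setIntegral_Ioi_add_mul_le hE hint hineq hC hs hh) ht

end TailIntegral

/-- **Komornik's integral inequality, case α = 0 (exponential decay).**
If `E : [0,∞) → [0,∞)` is non-increasing and `∫_t^∞ E(s) ds ≤ C E(t)` for all `t ≥ 0`,
then with `T = C` one has `E(t) ≤ E(0) exp(1 - t/T)` for all `t ≥ T`. -/
theorem komornik_exponential_decay
    (E : ℝ → ℝ) (hE0 : ∀ t, 0 ≤ t → 0 ≤ E t)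
    (hmono : ∀ s t, 0 ≤ s → s ≤ t → E t ≤ E s)
    (hint : IntegrableOn E (Ioi 0))
    (C : ℝ) (hC : 0 < C)
    (hineq : ∀ t, 0 ≤ t → ∫ s in Ioi t, E s ≤ C * E t) :
    ∀ t, C ≤ t → E t ≤ E 0 * Real.exp (1 - t / C) := by
  intro t ht
  have hE : AntitoneOn E (Ici 0) := fun s hs t _ hst => hmono s t hs hst
  have htC : 0 ≤ t - C := sub_nonneg.2 ht
  have hwindow : C * E t ≤ ∫ x in Ioi (t - C), E x := by
    have hE0' : ∀ x ∈ Ioi t, 0 ≤ E x := fun x hx => hE0 x (by linarith [mem_Ioi.1 hx])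
    simpa using mul_le_setIntegral_Ioi_of_antitoneOn (hE.mono (Ici_subset_Ici.2 htC))
      (hint.mono_set (Ioi_subset_Ioi htC)) hE0' (by linarith : t - C ≤ t)
  have hdecay := setIntegral_Ioi_mul_exp_le hE hint hineq hC htC
  have hexp : Real.exp (1 - t / C) = (Real.exp (C⁻¹ * (t - C)))⁻¹ := by
    rw [← Real.exp_neg]; congr 1; field_simp; ring
  rw [hexp, ← div_eq_mul_inv, le_div_iff₀ (Real.exp_pos _)]
  refine le_of_mul_le_mul_left ?_ hC
  calc C * (E t * Real.exp (C⁻¹ * (t - C)))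
      = C * E t * Real.exp (C⁻¹ * (t - C)) := by ring
    _ ≤ (∫ x in Ioi (t - C), E x) * Real.exp (C⁻¹ * (t - C)) := by gcongr
    _ ≤ ∫ x in Ioi 0, E x := hdecay
    _ ≤ C * E 0 := hineq 0 le_rfl
end

section
/- Let U(r,θ) = r^{1/2} sin(θ/2) in polar coordinates on the upper half-plane, and let m be a C¹ vector field on R² with m(0)·e₂ = 0, where e₂ denotes the outward normal direction at the origin (pointing into the lower half-plane). On the half-circle C_ε = {(ε cos θ, ε sin θ) : 0 < θ < π}, with ν the unit normal pointing toward the origin, one has lim_{ε→0} ∫_{C_ε} (2(ν·∇U)(m·∇U) - (m·ν)|∇U|²) dℓ = (π/4) m(0)·τ, where τ is the unit tangent vector to the boundary at 0 pointing from the Neumann side toward the Dirichlet side. -/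
/-!
On the half-circle of radius `ε` one has `U = √ε sin(θ/2)` and
`∇U = (2√ε)⁻¹ (-sin(θ/2), cos(θ/2))`, so `|∇U|² = 1/(4ε)`. The integrand
`2(ν·∇U)(m·∇U) - (m·ν)|∇U|²` is `m · (2(ν·∇U)∇U - |∇U|²ν)`, i.e. `|∇U|²` times `m` paired with
the reflection of `ν` in the line `ℝ∇U`. As `ν` has angle `θ + π` and `∇U` has angle
`θ/2 + π/2`, that reflection is `e₁` for every `θ`. So the integrand times the arc-length factor
`ε` is exactly `m(ε cos θ, ε sin θ)·e₁ / 4`, and the limit follows from the continuity of `m`.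
-/

open Set Filter Topology MeasureTheory
open scoped RealInnerProductSpace

noncomputable section

/-- The vector `(a, b)` of the Euclidean plane. -/
def vec2 (a b : ℝ) : EuclideanSpace ℝ (Fin 2) :=
  (WithLp.equiv 2 (Fin 2 → ℝ)).symm ![a, b]

/-- Shamir's singular function `U(r,θ) = r^{1/2} sin(θ/2)` in Cartesian coordinates:
`U(x, y) = sqrt((r - x)/2)` where `r = sqrt(x² + y²)`. -/
def shamirU : EuclideanSpace ℝ (Fin 2) → ℝ :=
  fun p => Real.sqrt ((Real.sqrt (p 0 ^ 2 + p 1 ^ 2) - p 0) / 2)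

open Real

@[simp] lemma vec2_apply_zero (a b : ℝ) : vec2 a b 0 = a := rfl
@[simp] lemma vec2_apply_one (a b : ℝ) : vec2 a b 1 = b := rfl

lemma inner_vec2_left (a b : ℝ) (v : EuclideanSpace ℝ (Fin 2)) :
    ⟪vec2 a b, v⟫ = a * v 0 + b * v 1 := by
  simp [PiLp.inner_apply, Fin.sum_univ_two, mul_comm]

lemma norm_vec2_sq (a b : ℝ) : ‖vec2 a b‖ ^ 2 = a ^ 2 + b ^ 2 := by
  simp [EuclideanSpace.norm_sq_eq, Fin.sum_univ_two]

lemma smul_vec2 (k a b : ℝ) : k • vec2 a b = vec2 (k * a) (k * b) := by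
  ext i; fin_cases i <;> simp

lemma vec2_sub_vec2 (a b c d : ℝ) : vec2 a b - vec2 c d = vec2 (a - c) (b - d) := by
  ext i; fin_cases i <;> simp

lemma vec2_zero : vec2 0 0 = 0 := by
  ext i; fin_cases i <;> simp

@[fun_prop]
lemma Continuous.vec2 {X : Type*} [TopologicalSpace X] {f g : X → ℝ} (hf : Continuous f)
    (hg : Continuous g) : Continuous fun x => vec2 (f x) (g x) :=
  (PiLp.continuous_toLp 2 _).comp (by fun_prop)

lemma shamirU_eq (p : EuclideanSpace ℝ (Fin 2)) : shamirU p = √((‖p‖ - p 0) / 2) := by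
  simp [shamirU, EuclideanSpace.norm_eq, Fin.sum_univ_two]

lemma hasFDerivAt_norm {E : Type*} [NormedAddCommGroup E] [InnerProductSpace ℝ E] {x : E}
    (hx : x ≠ 0) : HasFDerivAt (‖·‖) (‖x‖⁻¹ • innerSL ℝ x) x := by
  have h := (hasStrictFDerivAt_norm_sq x).hasFDerivAt.sqrt (by positivity)
  simp only [Real.sqrt_sq (norm_nonneg _)] at h
  convert h using 1
  ext y
  simp only [smul_apply, coe_innerSL_apply, smul_eq_mul, nsmul_eq_mul, Nat.cast_ofNat]
  field_simp

lemma hasGradientAt_shamirU {p : EuclideanSpace ℝ (Fin 2)} (hp : p 0 < ‖p‖) :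
    HasGradientAt shamirU ((4 * shamirU p)⁻¹ • (‖p‖⁻¹ • p - vec2 1 0)) p := by
  have hp0 : p ≠ 0 := by rintro rfl; simp at hp
  have hshamirU : shamirU = fun q => √((2 : ℝ)⁻¹ • (‖q‖ - innerSL ℝ (vec2 1 0) q)) := by
    funext q; simp [shamirU_eq, inner_vec2_left, div_eq_inv_mul]
  have hsqrt := (((hasFDerivAt_norm hp0).fun_sub
    (innerSL ℝ (vec2 1 0)).hasFDerivAt).fun_const_smul (2 : ℝ)⁻¹).sqrt
    (by simp [inner_vec2_left]; linarith)
  rw [← hshamirU, show √_ = shamirU p by rw [hshamirU]] at hsqrt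
  rw [hasGradientAt_iff_hasFDerivAt]
  refine hsqrt.congr_fderiv ?_
  ext u
  simp only [InnerProductSpace.toDual_apply_apply, smul_apply, sub_apply, coe_innerSL_apply,
    inner_smul_left, inner_sub_left, inner_vec2_left, smul_eq_mul, RCLike.conj_to_real]
  field_simp
  ring

lemma norm_vec2_polar {ε : ℝ} (hε : 0 ≤ ε) (θ : ℝ) : ‖vec2 (ε * cos θ) (ε * sin θ)‖ = ε := by
  rw [← sq_eq_sq₀ (norm_nonneg _) hε, norm_vec2_sq]
  linear_combination ε ^ 2 * sin_sq_add_cos_sq θ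

lemma shamirU_polar {ε θ : ℝ} (hε : 0 ≤ ε) (hθ : θ ∈ Icc 0 π) :
    shamirU (vec2 (ε * cos θ) (ε * sin θ)) = √ε * sin (θ / 2) := by
  rw [shamirU_eq, norm_vec2_polar hε, sin_half_eq_sqrt hθ.1 (by linarith [hθ.2, pi_pos]),
    ← sqrt_mul hε]
  simp only [vec2_apply_zero]
  ring_nf

lemma gradient_shamirU_polar {ε θ : ℝ} (hε : 0 < ε) (hθ : θ ∈ Ioo 0 π) :
    gradient shamirU (vec2 (ε * cos θ) (ε * sin θ))
      = (2 * √ε)⁻¹ • vec2 (-sin (θ / 2)) (cos (θ / 2)) := by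
  obtain ⟨φ, rfl⟩ : ∃ φ, θ = 2 * φ := ⟨θ / 2, by ring⟩
  have hφ : 0 < sin φ := sin_pos_of_pos_of_lt_pi (by linarith [hθ.1]) (by linarith [hθ.2, pi_pos])
  have hcos : cos (2 * φ) = 1 - 2 * sin φ ^ 2 := by rw [cos_two_mul, cos_sq']; ring
  have hp : (vec2 (ε * cos (2 * φ)) (ε * sin (2 * φ))) 0
      < ‖vec2 (ε * cos (2 * φ)) (ε * sin (2 * φ))‖ := by
    rw [norm_vec2_polar hε.le, vec2_apply_zero, hcos]
    nlinarith [mul_pos hε (pow_pos hφ 2)]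
  rw [(hasGradientAt_shamirU hp).gradient, norm_vec2_polar hε.le,
    shamirU_polar hε.le (Ioo_subset_Icc_self hθ), mul_div_cancel_left₀ _ two_ne_zero]
  simp only [smul_vec2, vec2_sub_vec2]
  congr 1
  · rw [hcos]; field_simp; ring
  · rw [sin_two_mul]; field_simp; ring

section Reflection

variable {E : Type*} [NormedAddCommGroup E] [InnerProductSpace ℝ E]

/-- `‖g‖²` times the reflection of `ν` in the line `ℝ ∙ g`. -/
def scaledReflection (g ν : E) : E := (2 * ⟪ν, g⟫) • g - ‖g‖ ^ 2 • ν

lemma inner_scaledReflection (g ν v : E) :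
    ⟪v, scaledReflection g ν⟫ = 2 * ⟪ν, g⟫ * ⟪v, g⟫ - ⟪v, ν⟫ * ‖g‖ ^ 2 := by
  rw [scaledReflection, inner_sub_right, inner_smul_right, inner_smul_right]
  ring

lemma scaledReflection_smul_left (k : ℝ) (g ν : E) :
    scaledReflection (k • g) ν = k ^ 2 • scaledReflection g ν := by
  rw [scaledReflection, scaledReflection, inner_smul_right, norm_smul, mul_pow, Real.norm_eq_abs,
    sq_abs]
  module

end Reflection

lemma scaledReflection_half_angle (φ : ℝ) :
    scaledReflection (vec2 (-sin φ) (cos φ)) (vec2 (-cos (2 * φ)) (-sin (2 * φ))) = vec2 1 0 := by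
  rw [scaledReflection, norm_vec2_sq, neg_sq, sin_sq_add_cos_sq, inner_vec2_left, cos_two_mul',
    sin_two_mul]
  simp only [vec2_apply_zero, vec2_apply_one, one_smul, smul_vec2, vec2_sub_vec2]
  congr 1
  · linear_combination (2 * sin φ ^ 2 + 1) * sin_sq_add_cos_sq φ
  · linear_combination -(2 * sin φ * cos φ) * sin_sq_add_cos_sq φ

lemma rellich_integrand_polar (v : EuclideanSpace ℝ (Fin 2)) {ε θ : ℝ} (hε : 0 < ε)
    (hθ : θ ∈ Ioo 0 π) :
    (2 * ⟪vec2 (-cos θ) (-sin θ), gradient shamirU (vec2 (ε * cos θ) (ε * sin θ))⟫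
        * ⟪v, gradient shamirU (vec2 (ε * cos θ) (ε * sin θ))⟫
      - ⟪v, vec2 (-cos θ) (-sin θ)⟫
        * ‖gradient shamirU (vec2 (ε * cos θ) (ε * sin θ))‖ ^ 2) * ε
      = ⟪v, vec2 1 0⟫ / 4 := by
  rw [← inner_scaledReflection, gradient_shamirU_polar hε hθ, scaledReflection_smul_left]
  obtain ⟨φ, rfl⟩ : ∃ φ, θ = 2 * φ := ⟨θ / 2, by ring⟩
  rw [mul_div_cancel_left₀ φ two_ne_zero, scaledReflection_half_angle, inner_smul_right, inv_pow,
    mul_pow, sq_sqrt hε.le]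
  field_simp
  ring

lemma tendsto_setIntegral_Ioo_polar {a b : ℝ} (hab : a ≤ b) {f : EuclideanSpace ℝ (Fin 2) → ℝ}
    (hf : Continuous f) :
    Tendsto (fun ε => ∫ θ in Ioo a b, f (vec2 (ε * cos θ) (ε * sin θ))) (𝓝 0)
      (𝓝 ((b - a) * f 0)) := by
  have hcont := continuous_parametric_integral_of_continuous (μ := volume)
    (f := fun ε θ => f (vec2 (ε * cos θ) (ε * sin θ))) (by fun_prop) isCompact_Icc (s := Icc a b)
  simp only [integral_Icc_eq_integral_Ioo] at hcont
  convert hcont.tendsto 0 using 2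
  simp [vec2_zero, hab]

theorem singular_halfcircle_limit_general
    (m : EuclideanSpace ℝ (Fin 2) → EuclideanSpace ℝ (Fin 2))
    (hm : ContDiff ℝ 1 m) :
    Tendsto
      (fun ε : ℝ => ∫ θ in Ioo 0 Real.pi,
        (2 * ⟪vec2 (-Real.cos θ) (-Real.sin θ), gradient shamirU (vec2 (ε * Real.cos θ) (ε * Real.sin θ))⟫
            * ⟪m (vec2 (ε * Real.cos θ) (ε * Real.sin θ)),
                gradient shamirU (vec2 (ε * Real.cos θ) (ε * Real.sin θ))⟫
          - ⟪m (vec2 (ε * Real.cos θ) (ε * Real.sin θ)), vec2 (-Real.cos θ) (-Real.sin θ)⟫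
            * ‖gradient shamirU (vec2 (ε * Real.cos θ) (ε * Real.sin θ))‖ ^ 2) * ε)
      (𝓝[>] 0)
      (𝓝 (Real.pi / 4 * ⟪m 0, vec2 1 0⟫)) := by
  have hlim := tendsto_setIntegral_Ioo_polar pi_pos.le
    (f := fun p => ⟪m p, vec2 1 0⟫ / 4) ((hm.continuous.inner continuous_const).div_const 4)
  rw [sub_zero] at hlim
  rw [div_mul_eq_mul_div, mul_div_assoc]
  refine (hlim.mono_left nhdsWithin_le_nhds).congr' ?_
  filter_upwards [self_mem_nhdsWithin] with ε hε
  exact setIntegral_congr_fun measurableSet_Ioo fun θ hθ =>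
    (rellich_integrand_polar _ hε hθ).symm

/-- **Singular contribution in the Rellich relation.** For the Shamir singular function
`U(r,θ) = r^{1/2} sin(θ/2)` and a `C¹` vector field `m` with `m(0)·e₂ = 0`
(`e₂ = (0,-1)` the outward normal at the origin), the integral over the half-circle `C_ε`
(with `ν` the unit normal pointing toward the origin) of
`2(ν·∇U)(m·∇U) - (m·ν)|∇U|²` tends to `(π/4) m(0)·τ` with `τ = e₁`, as `ε → 0⁺`. -/
theorem singular_halfcircle_limit
    (m : EuclideanSpace ℝ (Fin 2) → EuclideanSpace ℝ (Fin 2))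
    (hm : ContDiff ℝ 1 m)
    (hm0 : ⟪m 0, vec2 0 (-1)⟫ = 0) :
    Tendsto
      (fun ε : ℝ => ∫ θ in Ioo 0 Real.pi,
        (2 * ⟪vec2 (-Real.cos θ) (-Real.sin θ), gradient shamirU (vec2 (ε * Real.cos θ) (ε * Real.sin θ))⟫
            * ⟪m (vec2 (ε * Real.cos θ) (ε * Real.sin θ)),
                gradient shamirU (vec2 (ε * Real.cos θ) (ε * Real.sin θ))⟫
          - ⟪m (vec2 (ε * Real.cos θ) (ε * Real.sin θ)), vec2 (-Real.cos θ) (-Real.sin θ)⟫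
            * ‖gradient shamirU (vec2 (ε * Real.cos θ) (ε * Real.sin θ))‖ ^ 2) * ε)
      (𝓝[>] 0)
      (𝓝 (Real.pi / 4 * ⟪m 0, vec2 1 0⟫)) :=
  singular_halfcircle_limit_general m hm
end
end

section
/- Let B₂⁺ = {(x,y) ∈ R² : x² + y² < 1, y > 0} be the open upper half-disc and let v ∈ H¹(B₂⁺) vanish on the segment {(x,0) : 0 < x < 1}. Then there exists a universal constant C > 0 such that ∫_{C⁺} v² dℓ ≤ C ∫_{B₂⁺} |∇v|² dx dy, where C⁺ = {(cos θ, sin θ) : 0 < θ < π} is the upper half-circle. -/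
open Set MeasureTheory

section TracePoincareAux

lemma tp_cs_Ioo {f : ℝ → ℝ} (hf : Continuous f) (hnn : ∀ x, 0 ≤ f x) {a b : ℝ} (hab : a ≤ b) :
    (∫ x in Ioo a b, f x) ^ 2 ≤ (b - a) * ∫ x in Ioo a b, f x ^ 2 := by
  set μ := volume.restrict (Ioo a b) with hμ
  have hfin : IsFiniteMeasure μ := by
    constructor
    rw [hμ, Measure.restrict_apply_univ, Real.volume_Ioo]
    exact ENNReal.ofReal_lt_top
  have hint2 : Integrable (fun x => f x ^ 2) μ := by
    refine ((hf.pow 2).continuousOn.integrableOn_compact isCompact_Icc).mono_set Ioo_subset_Icc_self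
  have hmem : MemLp f (ENNReal.ofReal 2) μ := by
    rw [show ENNReal.ofReal 2 = 2 by norm_num]
    exact (memLp_two_iff_integrable_sq hf.aestronglyMeasurable).2 hint2
  have hmem1 : MemLp (fun _ : ℝ => (1:ℝ)) (ENNReal.ofReal 2) μ := memLp_const 1
  have hpq : Real.HolderConjugate 2 2 := by rw [Real.holderConjugate_iff]; norm_num
  have h := integral_mul_le_Lp_mul_Lq_of_nonneg (μ := μ) hpq
    (Filter.Eventually.of_forall hnn) (Filter.Eventually.of_forall fun _ => zero_le_one)
    hmem hmem1
  simp only [show ((2:ℝ)) = ((2:ℕ):ℝ) by norm_num, Real.rpow_natCast, mul_one, one_pow] at h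
  have hμc : ∫ _ in Ioo a b, (1:ℝ) = b - a := by
    simp [Real.volume_Ioo, ENNReal.toReal_ofReal (sub_nonneg.2 hab), hab]
  have hI2 : 0 ≤ ∫ x in Ioo a b, f x ^ 2 := by
    exact setIntegral_nonneg measurableSet_Ioo fun x _ => sq_nonneg _
  have hba : 0 ≤ b - a := sub_nonneg.2 hab
  rw [hμc] at h
  calc (∫ x in Ioo a b, f x) ^ 2
      ≤ ((∫ x in Ioo a b, f x ^ 2) ^ (1/(2:ℝ)) * (b - a) ^ (1/(2:ℝ))) ^ 2 := by
        apply pow_le_pow_left₀ (setIntegral_nonneg measurableSet_Ioo fun x _ => hnn x) h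
    _ = (b - a) * ∫ x in Ioo a b, f x ^ 2 := by
        rw [mul_pow, ← Real.rpow_natCast ((∫ x in Ioo a b, f x ^ 2) ^ (1/(2:ℝ))) 2,
          ← Real.rpow_natCast ((b - a) ^ (1/(2:ℝ))) 2,
          ← Real.rpow_mul hI2, ← Real.rpow_mul hba]
        norm_num [Real.rpow_one]
        ring

lemma tp_hasDerivAt_ang {v : ℝ × ℝ → ℝ} (hv : ContDiff ℝ 1 v) (r θ : ℝ) :
    HasDerivAt (fun φ => v (r * Real.cos φ, r * Real.sin φ))
      (fderiv ℝ v (r * Real.cos θ, r * Real.sin θ) (r * -Real.sin θ, r * Real.cos θ)) θ := by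
  have h1 : HasDerivAt (fun φ => ((r * Real.cos φ, r * Real.sin φ) : ℝ × ℝ))
      (r * -Real.sin θ, r * Real.cos θ) θ :=
    ((Real.hasDerivAt_cos θ).const_mul r).prodMk ((Real.hasDerivAt_sin θ).const_mul r)
  exact ((hv.differentiable one_ne_zero _).hasFDerivAt).comp_hasDerivAt θ h1

lemma tp_hasDerivAt_rad {v : ℝ × ℝ → ℝ} (hv : ContDiff ℝ 1 v) (θ s : ℝ) :
    HasDerivAt (fun t => v (t * Real.cos θ, t * Real.sin θ))
      (fderiv ℝ v (s * Real.cos θ, s * Real.sin θ) (Real.cos θ, Real.sin θ)) s := by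
  have h1 : HasDerivAt (fun t => ((t * Real.cos θ, t * Real.sin θ) : ℝ × ℝ))
      (Real.cos θ, Real.sin θ) s :=
    (hasDerivAt_mul_const (Real.cos θ)).prodMk (hasDerivAt_mul_const (Real.sin θ))
  exact ((hv.differentiable one_ne_zero _).hasFDerivAt).comp_hasDerivAt s h1

lemma tp_norm_apply_ang {v : ℝ × ℝ → ℝ} (p : ℝ × ℝ) {r θ : ℝ} (hr : |r| ≤ 1) :
    |fderiv ℝ v p (r * -Real.sin θ, r * Real.cos θ)| ≤ ‖fderiv ℝ v p‖ := by
  calc |fderiv ℝ v p (r * -Real.sin θ, r * Real.cos θ)|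
      ≤ ‖fderiv ℝ v p‖ * ‖((r * -Real.sin θ, r * Real.cos θ) : ℝ × ℝ)‖ :=
        (fderiv ℝ v p).le_opNorm _
    _ ≤ ‖fderiv ℝ v p‖ * 1 := by
        apply mul_le_mul_of_nonneg_left _ (norm_nonneg _)
        rw [Prod.norm_def]
        apply max_le
        · rw [Real.norm_eq_abs, abs_mul, abs_neg]
          exact mul_le_one₀ hr (abs_nonneg _) (Real.abs_sin_le_one θ)
        · rw [Real.norm_eq_abs, abs_mul]
          exact mul_le_one₀ hr (abs_nonneg _) (Real.abs_cos_le_one θ)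
    _ = ‖fderiv ℝ v p‖ := mul_one _

lemma tp_norm_apply_rad {v : ℝ × ℝ → ℝ} (p : ℝ × ℝ) (θ : ℝ) :
    |fderiv ℝ v p (Real.cos θ, Real.sin θ)| ≤ ‖fderiv ℝ v p‖ := by
  calc |fderiv ℝ v p (Real.cos θ, Real.sin θ)|
      ≤ ‖fderiv ℝ v p‖ * ‖((Real.cos θ, Real.sin θ) : ℝ × ℝ)‖ := (fderiv ℝ v p).le_opNorm _
    _ ≤ ‖fderiv ℝ v p‖ * 1 := by
        apply mul_le_mul_of_nonneg_left _ (norm_nonneg _)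
        rw [Prod.norm_def]
        exact max_le (by rw [Real.norm_eq_abs]; exact Real.abs_cos_le_one θ)
          (by rw [Real.norm_eq_abs]; exact Real.abs_sin_le_one θ)
    _ = ‖fderiv ℝ v p‖ := mul_one _

lemma tp_cont_integrableOn_Ioo {f : ℝ → ℝ} (hf : Continuous f) (a b : ℝ) :
    IntegrableOn f (Ioo a b) :=
  (hf.continuousOn.integrableOn_compact isCompact_Icc).mono_set Ioo_subset_Icc_self

lemma tp_cont_integrableOn_IooProd {f : ℝ × ℝ → ℝ} (hf : Continuous f) (a b c d : ℝ) :
    IntegrableOn f (Ioo a b ×ˢ Ioo c d) := by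
  apply (hf.continuousOn.integrableOn_compact (isCompact_Icc (a := (a, c)) (b := (b, d)))).mono_set
  intro p hp
  simp only [mem_prod, mem_Ioo] at hp
  simp only [mem_Icc, Prod.le_def]
  exact ⟨⟨hp.1.1.le, hp.2.1.le⟩, ⟨hp.1.2.le, hp.2.2.le⟩⟩

lemma tp_key_bound {v : ℝ × ℝ → ℝ} (hv : ContDiff ℝ 1 v)
    (hv0 : ∀ x ∈ Ioo (0:ℝ) 1, v (x, 0) = 0) {θ r : ℝ}
    (hθ : θ ∈ Ioo 0 Real.pi) (hr : r ∈ Ioo (1/2:ℝ) 1) :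
    |v (Real.cos θ, Real.sin θ)|
      ≤ (∫ φ in Ioo 0 Real.pi, ‖fderiv ℝ v (r * Real.cos φ, r * Real.sin φ)‖)
        + ∫ s in Ioo (1/2:ℝ) 1, ‖fderiv ℝ v (s * Real.cos θ, s * Real.sin θ)‖ := by
  obtain ⟨hθ0, hθπ⟩ := hθ
  obtain ⟨hr0, hr1⟩ := hr
  have hrpos : (0:ℝ) < r := lt_trans (by norm_num) hr0
  have hrabs : |r| ≤ 1 := by rw [abs_of_pos hrpos]; exact hr1.le
  have hDc : Continuous fun p : ℝ × ℝ => ‖fderiv ℝ v p‖ :=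
    (hv.continuous_fderiv one_ne_zero).norm
  have hcurve_ang : Continuous fun φ : ℝ => ((r * Real.cos φ, r * Real.sin φ) : ℝ × ℝ) := by
    fun_prop
  have hc_ang : Continuous fun φ =>
      fderiv ℝ v (r * Real.cos φ, r * Real.sin φ) (r * -Real.sin φ, r * Real.cos φ) := by
    apply Continuous.clm_apply
    · exact (hv.continuous_fderiv one_ne_zero).comp hcurve_ang
    · fun_prop
  have hcurve_rad : Continuous fun s : ℝ => ((s * Real.cos θ, s * Real.sin θ) : ℝ × ℝ) := by
    fun_prop
  have hc_rad : Continuous fun s =>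
      fderiv ℝ v (s * Real.cos θ, s * Real.sin θ) (Real.cos θ, Real.sin θ) := by
    apply Continuous.clm_apply
    · exact (hv.continuous_fderiv one_ne_zero).comp hcurve_rad
    · exact continuous_const
  have ftc_ang : ∫ φ in (0:ℝ)..θ,
      fderiv ℝ v (r * Real.cos φ, r * Real.sin φ) (r * -Real.sin φ, r * Real.cos φ)
        = v (r * Real.cos θ, r * Real.sin θ) := by
    rw [intervalIntegral.integral_eq_sub_of_hasDerivAt (fun x _ => tp_hasDerivAt_ang hv r x)
      (hc_ang.intervalIntegrable 0 θ)]
    have : v (r * Real.cos 0, r * Real.sin 0) = 0 := by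
      simpa using hv0 r ⟨hrpos, hr1⟩
    rw [this, sub_zero]
  have bd_int : |v (r * Real.cos θ, r * Real.sin θ)|
      ≤ ∫ φ in Ioo 0 Real.pi, ‖fderiv ℝ v (r * Real.cos φ, r * Real.sin φ)‖ := by
    rw [← ftc_ang]
    calc |∫ φ in (0:ℝ)..θ,
          fderiv ℝ v (r * Real.cos φ, r * Real.sin φ) (r * -Real.sin φ, r * Real.cos φ)|
        ≤ ∫ φ in (0:ℝ)..θ,
            |fderiv ℝ v (r * Real.cos φ, r * Real.sin φ) (r * -Real.sin φ, r * Real.cos φ)| :=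
          intervalIntegral.abs_integral_le_integral_abs hθ0.le
      _ ≤ ∫ φ in (0:ℝ)..θ, ‖fderiv ℝ v (r * Real.cos φ, r * Real.sin φ)‖ := by
          apply intervalIntegral.integral_mono_on hθ0.le
            (hc_ang.abs.intervalIntegrable 0 θ)
            ((hDc.comp hcurve_ang).intervalIntegrable 0 θ)
          intro x _
          exact tp_norm_apply_ang _ hrabs
      _ = ∫ φ in Ioo 0 θ, ‖fderiv ℝ v (r * Real.cos φ, r * Real.sin φ)‖ := by
          rw [intervalIntegral.integral_of_le hθ0.le, integral_Ioc_eq_integral_Ioo]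
      _ ≤ ∫ φ in Ioo 0 Real.pi, ‖fderiv ℝ v (r * Real.cos φ, r * Real.sin φ)‖ := by
          apply setIntegral_mono_set (tp_cont_integrableOn_Ioo (hDc.comp hcurve_ang) 0 Real.pi)
            (Filter.Eventually.of_forall fun x => norm_nonneg _)
          exact HasSubset.Subset.eventuallyLE (Ioo_subset_Ioo le_rfl hθπ.le)
  have ftc_rad : ∫ s in r..(1:ℝ),
      fderiv ℝ v (s * Real.cos θ, s * Real.sin θ) (Real.cos θ, Real.sin θ)
        = v (Real.cos θ, Real.sin θ) - v (r * Real.cos θ, r * Real.sin θ) := by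
    rw [intervalIntegral.integral_eq_sub_of_hasDerivAt (fun x _ => tp_hasDerivAt_rad hv θ x)
      (hc_rad.intervalIntegrable r 1)]
    norm_num
  have bd_rad : |∫ s in r..(1:ℝ),
      fderiv ℝ v (s * Real.cos θ, s * Real.sin θ) (Real.cos θ, Real.sin θ)|
      ≤ ∫ s in Ioo (1/2:ℝ) 1, ‖fderiv ℝ v (s * Real.cos θ, s * Real.sin θ)‖ := by
    calc |∫ s in r..(1:ℝ),
          fderiv ℝ v (s * Real.cos θ, s * Real.sin θ) (Real.cos θ, Real.sin θ)|
        ≤ ∫ s in r..(1:ℝ),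
            |fderiv ℝ v (s * Real.cos θ, s * Real.sin θ) (Real.cos θ, Real.sin θ)| :=
          intervalIntegral.abs_integral_le_integral_abs hr1.le
      _ ≤ ∫ s in r..(1:ℝ), ‖fderiv ℝ v (s * Real.cos θ, s * Real.sin θ)‖ := by
          apply intervalIntegral.integral_mono_on hr1.le
            (hc_rad.abs.intervalIntegrable r 1)
            ((hDc.comp hcurve_rad).intervalIntegrable r 1)
          intro x _
          exact tp_norm_apply_rad _ θ
      _ = ∫ s in Ioo r 1, ‖fderiv ℝ v (s * Real.cos θ, s * Real.sin θ)‖ := by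
          rw [intervalIntegral.integral_of_le hr1.le, integral_Ioc_eq_integral_Ioo]
      _ ≤ ∫ s in Ioo (1/2:ℝ) 1, ‖fderiv ℝ v (s * Real.cos θ, s * Real.sin θ)‖ := by
          apply setIntegral_mono_set (tp_cont_integrableOn_Ioo (hDc.comp hcurve_rad) _ 1)
            (Filter.Eventually.of_forall fun x => norm_nonneg _)
          exact HasSubset.Subset.eventuallyLE (Ioo_subset_Ioo hr0.le le_rfl)
  have : v (Real.cos θ, Real.sin θ) = v (r * Real.cos θ, r * Real.sin θ)
      + ∫ s in r..(1:ℝ),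
        fderiv ℝ v (s * Real.cos θ, s * Real.sin θ) (Real.cos θ, Real.sin θ) := by
    rw [ftc_rad]; ring
  rw [this]
  exact (abs_add_le _ _).trans (add_le_add bd_int bd_rad)

lemma tp_polar_lower {G : ℝ × ℝ → ℝ} (hG : Continuous G) (hGnn : ∀ p, 0 ≤ G p) :
    ∫ p in Ioo (1/2:ℝ) 1 ×ˢ Ioo 0 Real.pi, G (p.1 * Real.cos p.2, p.1 * Real.sin p.2)
      ≤ 2 * ∫ p in {p : ℝ × ℝ | p.1 ^ 2 + p.2 ^ 2 < 1 ∧ 0 < p.2}, G p := by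
  set T : Set (ℝ × ℝ) := Ioo (1/2:ℝ) 1 ×ˢ Ioo 0 Real.pi with hT
  set S : Set (ℝ × ℝ) := {p : ℝ × ℝ | p.1 ^ 2 + p.2 ^ 2 < 1 ∧ 0 < p.2} with hS
  set A : Set (ℝ × ℝ) := polarCoord.symm '' T with hA
  have hTmeas : MeasurableSet T := (measurableSet_Ioo.prod measurableSet_Ioo)
  have hTsub : T ⊆ polarCoord.target := by
    rintro ⟨r, θ⟩ ⟨h1, h2⟩
    simp only [mem_Ioo] at h1 h2
    constructor
    · exact lt_trans (by norm_num) h1.1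
    · exact ⟨lt_of_lt_of_le (neg_neg_iff_pos.2 Real.pi_pos) h2.1.le, h2.2⟩
  have hsymm_cont : Continuous fun p : ℝ × ℝ => polarCoord.symm p := by
    simp only [polarCoord_symm_apply]
    fun_prop
  have hAmeas : MeasurableSet A :=
    hTmeas.image_of_continuousOn_injOn hsymm_cont.continuousOn
      (polarCoord.symm.injOn.mono hTsub)
  have hAS : A ⊆ S := by
    rintro p ⟨⟨r, θ⟩, hq, rfl⟩
    simp only [hT, mem_prod, mem_Ioo] at hq
    rw [polarCoord_symm_apply]
    constructor
    · have : (r * Real.cos θ) ^ 2 + (r * Real.sin θ) ^ 2 = r ^ 2 := by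
        have := Real.sin_sq_add_cos_sq θ; nlinarith
      rw [this]
      nlinarith [hq.1.1, hq.1.2]
    · exact mul_pos (lt_trans (by norm_num) hq.1.1)
        (Real.sin_pos_of_pos_of_lt_pi hq.2.1 hq.2.2)
  have hSsub : S ⊆ Icc ((-1:ℝ), (-1:ℝ)) ((1:ℝ), (1:ℝ)) := by
    rintro ⟨x, y⟩ ⟨h1, h2⟩
    simp only at h1 h2
    simp only [mem_Icc, Prod.le_def]
    constructor <;> constructor <;> nlinarith
  have hGS : IntegrableOn G S :=
    (hG.continuousOn.integrableOn_compact isCompact_Icc).mono_set hSsub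
  have step1 : ∫ p in A, G p ≤ ∫ p in S, G p :=
    setIntegral_mono_set hGS (Filter.Eventually.of_forall fun p => hGnn p)
      (HasSubset.Subset.eventuallyLE hAS)
  have step2 : ∫ p in A, G p = ∫ p in T, p.1 * G (polarCoord.symm p) := by
    rw [← integral_indicator hAmeas, ← integral_comp_polarCoord_symm (A.indicator G)]
    have hcongr : ∀ p ∈ polarCoord.target,
        p.1 • (A.indicator G) (polarCoord.symm p)
          = T.indicator (fun q => q.1 * G (polarCoord.symm q)) p := by
      intro p hp
      by_cases hpT : p ∈ T
      · rw [indicator_of_mem hpT, indicator_of_mem (mem_image_of_mem _ hpT)]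
        rfl
      · rw [indicator_of_notMem hpT, indicator_of_notMem, smul_zero]
        rintro ⟨q, hq, hqe⟩
        exact hpT (by rwa [polarCoord.symm.injOn (hTsub hq) hp hqe] at hq)
    rw [setIntegral_congr_fun polarCoord.open_target.measurableSet hcongr,
      setIntegral_indicator hTmeas, inter_eq_self_of_subset_right hTsub]
  have hsymm_eq : ∀ p : ℝ × ℝ,
      G (polarCoord.symm p) = G (p.1 * Real.cos p.2, p.1 * Real.sin p.2) := by
    intro p; rw [polarCoord_symm_apply]
  have step3 : (1/2) * (∫ p in T, G (p.1 * Real.cos p.2, p.1 * Real.sin p.2))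
      ≤ ∫ p in T, p.1 * G (polarCoord.symm p) := by
    rw [← integral_const_mul]
    apply setIntegral_mono_on
    · exact (tp_cont_integrableOn_IooProd (by fun_prop) _ _ _ _)
    · exact (tp_cont_integrableOn_IooProd (by fun_prop : Continuous fun p : ℝ × ℝ =>
        p.1 * G (p.1 * Real.cos p.2, p.1 * Real.sin p.2)) _ _ _ _).congr_fun
        (fun p _ => by rw [hsymm_eq]) hTmeas
    · exact hTmeas
    · intro p hp
      rw [hsymm_eq]
      exact mul_le_mul_of_nonneg_right (by exact (mem_prod.1 hp).1.1.le) (hGnn _)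
  have hSopen : IsOpen S := by
    have h1 : IsOpen {p : ℝ × ℝ | p.1 ^ 2 + p.2 ^ 2 < 1} :=
      isOpen_lt (by fun_prop) continuous_const
    have h2 : IsOpen {p : ℝ × ℝ | 0 < p.2} := isOpen_lt continuous_const continuous_snd
    exact h1.inter h2
  have hnn : 0 ≤ ∫ p in S, G p := setIntegral_nonneg hSopen.measurableSet fun p _ => hGnn p
  linarith

end TracePoincareAux

/-- **Trace–Poincaré inequality on the upper half-disc.** There is a universal constant
`C > 0` such that every `C¹` (hence `H¹`) function `v` on the upper half-disc
`B₂⁺ = {x² + y² < 1, y > 0}` vanishing on the segment `{(x,0) : 0 < x < 1}` satisfies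
`∫_{C⁺} v² dℓ ≤ C ∫_{B₂⁺} |∇v|² dx dy`, where `C⁺` is the upper half-circle. -/
theorem trace_poincare_half_disc :
    ∃ C > 0, ∀ v : ℝ × ℝ → ℝ, ContDiff ℝ 1 v →
      (∀ x ∈ Ioo (0 : ℝ) 1, v (x, 0) = 0) →
      ∫ θ in Ioo 0 Real.pi, (v (Real.cos θ, Real.sin θ)) ^ 2
        ≤ C * ∫ p in {p : ℝ × ℝ | p.1 ^ 2 + p.2 ^ 2 < 1 ∧ 0 < p.2}, ‖fderiv ℝ v p‖ ^ 2 := by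
  refine ⟨8 * Real.pi ^ 2 + 2, by positivity, ?_⟩
  intro v hv hv0
  set π := Real.pi with hπ
  have hπpos : (0:ℝ) < π := Real.pi_pos
  set I1 : Set ℝ := Ioo (1/2:ℝ) 1 with hI1
  set I2 : Set ℝ := Ioo (0:ℝ) π with hI2
  set F : ℝ × ℝ → ℝ := fun p => ‖fderiv ℝ v (p.1 * Real.cos p.2, p.1 * Real.sin p.2)‖ ^ 2
    with hF
  have hDc : Continuous fun p : ℝ × ℝ => ‖fderiv ℝ v p‖ := (hv.continuous_fderiv one_ne_zero).norm
  have hFc : Continuous F := by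
    apply Continuous.pow
    exact hDc.comp (by fun_prop)
  have hFnn : ∀ p, 0 ≤ F p := fun p => sq_nonneg _
  have hFT : IntegrableOn F (I1 ×ˢ I2) := tp_cont_integrableOn_IooProd hFc _ _ _ _
  have hFTswap : IntegrableOn (fun q : ℝ × ℝ => F q.swap) (I2 ×ˢ I1) :=
    tp_cont_integrableOn_IooProd (hFc.comp continuous_swap) _ _ _ _
  -- Fubini in both orders
  have hJ1 : (∫ p in I1 ×ˢ I2, F p) = ∫ r in I1, ∫ φ in I2, F (r, φ) := by
    rw [show (volume : Measure (ℝ × ℝ)) = (volume : Measure ℝ).prod volume from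
      Measure.volume_eq_prod ℝ ℝ]
    exact setIntegral_prod F (by rwa [← Measure.volume_eq_prod ℝ ℝ])
  have hswap_eq : (∫ p in I1 ×ˢ I2, F p) = ∫ q in I2 ×ˢ I1, F q.swap := by
    rw [show (volume : Measure (ℝ × ℝ)) = (volume : Measure ℝ).prod volume from
      Measure.volume_eq_prod ℝ ℝ, ← Measure.prod_restrict, ← Measure.prod_restrict,
      ← integral_prod_swap F]
  have hJ2 : (∫ p in I1 ×ˢ I2, F p) = ∫ θ in I2, ∫ s in I1, F (s, θ) := by
    rw [hswap_eq, show (volume : Measure (ℝ × ℝ)) = (volume : Measure ℝ).prod volume from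
      Measure.volume_eq_prod ℝ ℝ]
    exact setIntegral_prod (fun q : ℝ × ℝ => F q.swap) (by rwa [← Measure.volume_eq_prod ℝ ℝ])
  set J : ℝ := ∫ p in I1 ×ˢ I2, F p with hJ
  -- marginal integrability
  have hFT' : Integrable F ((volume.restrict I1).prod (volume.restrict I2)) := by
    rw [Measure.prod_restrict]
    rwa [← Measure.volume_eq_prod ℝ ℝ]
  have hFTswap' : Integrable (fun q : ℝ × ℝ => F q.swap)
      ((volume.restrict I2).prod (volume.restrict I1)) := by
    rw [Measure.prod_restrict]
    rwa [← Measure.volume_eq_prod ℝ ℝ]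
  have hA_int : IntegrableOn (fun r => ∫ φ in I2, F (r, φ)) I1 := hFT'.integral_prod_left
  have hB_int : IntegrableOn (fun θ => ∫ s in I1, F (s, θ)) I2 := hFTswap'.integral_prod_left
  -- squared pointwise bound
  have key2 : ∀ θ ∈ I2, ∀ r ∈ I1,
      (v (Real.cos θ, Real.sin θ)) ^ 2
        ≤ 2 * π * (∫ φ in I2, F (r, φ)) + ∫ s in I1, F (s, θ) := by
    intro θ hθ r hr
    set a : ℝ := ∫ φ in I2, ‖fderiv ℝ v (r * Real.cos φ, r * Real.sin φ)‖ with ha'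
    set b : ℝ := ∫ s in I1, ‖fderiv ℝ v (s * Real.cos θ, s * Real.sin θ)‖ with hb'
    have ha : 0 ≤ a := setIntegral_nonneg measurableSet_Ioo fun x _ => norm_nonneg _
    have hb : 0 ≤ b := setIntegral_nonneg measurableSet_Ioo fun x _ => norm_nonneg _
    have habs : |v (Real.cos θ, Real.sin θ)| ≤ a + b := tp_key_bound hv hv0 hθ hr
    have hsq : (v (Real.cos θ, Real.sin θ)) ^ 2 ≤ (a + b) ^ 2 := by
      rw [← sq_abs]
      exact pow_le_pow_left₀ (abs_nonneg _) habs 2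
    have hcs1 : a ^ 2 ≤ π * ∫ φ in I2, F (r, φ) := by
      have := tp_cs_Ioo (f := fun φ => ‖fderiv ℝ v (r * Real.cos φ, r * Real.sin φ)‖)
        (hDc.comp (by fun_prop)) (fun x => norm_nonneg _) (a := 0) (b := π) hπpos.le
      simpa using this
    have hcs2 : b ^ 2 ≤ ((1:ℝ) - 1/2) * ∫ s in I1, F (s, θ) :=
      tp_cs_Ioo (f := fun s => ‖fderiv ℝ v (s * Real.cos θ, s * Real.sin θ)‖)
        (hDc.comp (by fun_prop)) (fun x => norm_nonneg _) (a := (1/2:ℝ)) (b := 1) (by norm_num)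
    nlinarith [sq_nonneg (a - b)]
  -- integrate over r
  have stage1 : ∀ θ ∈ I2,
      (v (Real.cos θ, Real.sin θ)) ^ 2 ≤ 4 * π * J + ∫ s in I1, F (s, θ) := by
    intro θ hθ
    have hfin : (volume I1).toReal = 1/2 := by
      rw [hI1, Real.volume_Ioo]
      rw [ENNReal.toReal_ofReal (by norm_num)]
      norm_num
    have hconst : ∫ _ in I1, (v (Real.cos θ, Real.sin θ)) ^ 2
        = (1/2) * (v (Real.cos θ, Real.sin θ)) ^ 2 := by
      rw [setIntegral_const, measureReal_def, hfin, smul_eq_mul]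
    have hIμ : volume I1 ≠ ⊤ := by rw [hI1, Real.volume_Ioo]; exact ENNReal.ofReal_ne_top
    have hmono : ∫ _ in I1, (v (Real.cos θ, Real.sin θ)) ^ 2
        ≤ ∫ r in I1, (2 * π * (∫ φ in I2, F (r, φ)) + ∫ s in I1, F (s, θ)) := by
      apply setIntegral_mono_on
      · exact integrableOn_const hIμ
      · exact (hA_int.const_mul (2 * π)).add
          (integrableOn_const hIμ)
      · exact measurableSet_Ioo
      · intro r hr
        exact key2 θ hθ r hr
    have hsplit : ∫ r in I1, (2 * π * (∫ φ in I2, F (r, φ)) + ∫ s in I1, F (s, θ))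
        = 2 * π * J + (1/2) * ∫ s in I1, F (s, θ) := by
      rw [integral_add (hA_int.const_mul (2 * π))
        (integrableOn_const hIμ), integral_const_mul,
        setIntegral_const, measureReal_def, hfin, smul_eq_mul, ← hJ1]
    rw [hconst, hsplit] at hmono
    linarith
  -- integrate over θ
  have hLHS_int : IntegrableOn (fun θ => (v (Real.cos θ, Real.sin θ)) ^ 2) I2 :=
    tp_cont_integrableOn_Ioo ((hv.continuous.comp
      (by fun_prop : Continuous fun θ : ℝ => ((Real.cos θ, Real.sin θ) : ℝ × ℝ))).pow 2) _ _
  have hI2μ : volume I2 ≠ ⊤ := by rw [hI2, Real.volume_Ioo]; exact ENNReal.ofReal_ne_top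
  have stage2 : ∫ θ in I2, (v (Real.cos θ, Real.sin θ)) ^ 2 ≤ 4 * π ^ 2 * J + J := by
    have hmono : ∫ θ in I2, (v (Real.cos θ, Real.sin θ)) ^ 2
        ≤ ∫ θ in I2, (4 * π * J + ∫ s in I1, F (s, θ)) := by
      apply setIntegral_mono_on hLHS_int
      · exact (integrableOn_const hI2μ).add hB_int
      · exact measurableSet_Ioo
      · exact stage1
    have hsplit : ∫ θ in I2, (4 * π * J + ∫ s in I1, F (s, θ)) = 4 * π * J * π + J := by
      have hcI : IntegrableOn (fun _ => 4 * π * J) I2 := integrableOn_const hI2μ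
      rw [integral_add hcI hB_int,
        setIntegral_const, measureReal_def, ← hJ2, hI2, Real.volume_Ioo, sub_zero, ENNReal.toReal_ofReal hπpos.le,
        smul_eq_mul]
      ring
    rw [hsplit] at hmono
    calc ∫ θ in I2, (v (Real.cos θ, Real.sin θ)) ^ 2 ≤ 4 * π * J * π + J := hmono
      _ = 4 * π ^ 2 * J + J := by ring
  -- polar coordinates lower bound for the Dirichlet energy
  have stage3 : J ≤ 2 * ∫ p in {p : ℝ × ℝ | p.1 ^ 2 + p.2 ^ 2 < 1 ∧ 0 < p.2},
      ‖fderiv ℝ v p‖ ^ 2 := by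
    have := tp_polar_lower (G := fun p : ℝ × ℝ => ‖fderiv ℝ v p‖ ^ 2)
      (hDc.pow 2) (fun p => sq_nonneg _)
    exact this
  set R : ℝ := ∫ p in {p : ℝ × ℝ | p.1 ^ 2 + p.2 ^ 2 < 1 ∧ 0 < p.2}, ‖fderiv ℝ v p‖ ^ 2
    with hR
  have hmul : π ^ 2 * J ≤ π ^ 2 * (2 * R) :=
    mul_le_mul_of_nonneg_left stage3 (sq_nonneg _)
  calc ∫ θ in I2, (v (Real.cos θ, Real.sin θ)) ^ 2
      ≤ 4 * π ^ 2 * J + J := stage2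
    _ ≤ (8 * π ^ 2 + 2) * R := by nlinarith
end
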